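/- For n ≥ 5, the signless Laplacian spectral radius of C₅∘(n-4,1,1,1,1) satisfies n - 1 - 1/n < q(C₅∘(n-4,1,1,1,1)) < n - 1/n. -/

import Mathlib

open SimpleGraph Matrix Finset BigOperators

/-- The signless Laplacian matrix `Q(G) = D(G) + A(G)` of a simple graph, over `ℝ`. -/
noncomputable def signlessLaplacian {V : Type*} [Fintype V] [DecidableEq V]
    (G : SimpleGraph V) : Matrix V V ℝ :=
  letI := Classical.decRel G.Adj
  G.degMatrix ℝ + G.adjMatrix ℝ

/-- The `Q`-index of a graph: the largest eigenvalue of its signless Laplacian matrix. -/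
noncomputable def qIndex {V : Type*} [Fintype V] [DecidableEq V] (G : SimpleGraph V) : ℝ :=
  sSup (spectrum ℝ (signlessLaplacian G))

/-- The blow-up `C₅ ∘ (r₁,…,r₅)` of the 5-cycle: vertex `vᵢ` of `C₅` is replaced by an
independent set of `r i` vertices, and classes of adjacent cycle vertices are fully joined. -/
def C5blowup (r : Fin 5 → ℕ) : SimpleGraph ((i : Fin 5) × Fin (r i)) where
  Adj a b := a.1 = b.1 + 1 ∨ b.1 = a.1 + 1
  symm := ⟨fun a b h => Or.symm h⟩
  loopless := ⟨fun a h => by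
    have h5 : ∀ i : Fin 5, ¬ i = i + 1 := by decide
    rcases h with h | h <;> exact h5 _ h⟩

/-- The graph `C₅ • K_{1,t}` obtained by identifying a vertex of the 5-cycle
(the vertex `Sum.inl 0`) with the center of the star `K_{1,t}`. -/
def C5star (t : ℕ) : SimpleGraph (Fin 5 ⊕ Fin t) where
  Adj a b :=
    (∃ i j : Fin 5, a = Sum.inl i ∧ b = Sum.inl j ∧ (i = j + 1 ∨ j = i + 1)) ∨
    (a = Sum.inl 0 ∧ ∃ j : Fin t, b = Sum.inr j) ∨
    (b = Sum.inl 0 ∧ ∃ j : Fin t, a = Sum.inr j)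
  symm := ⟨fun a b h => by
    rcases h with ⟨i, j, hi, hj, hij⟩ | ⟨h1, j, h2⟩ | ⟨h1, j, h2⟩
    · exact Or.inl ⟨j, i, hj, hi, Or.symm hij⟩
    · exact Or.inr (Or.inr ⟨h1, j, h2⟩)
    · exact Or.inr (Or.inl ⟨h1, j, h2⟩)⟩
  loopless := ⟨fun a h => by
    have h5 : ∀ i : Fin 5, ¬ i = i + 1 := by decide
    rcases h with ⟨i, j, hi, hj, hij⟩ | ⟨h1, j, h2⟩ | ⟨h1, j, h2⟩
    · subst hi; cases hj; rcases hij with h | h <;> exact h5 _ h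
    · subst h1; simp at h2
    · subst h1; simp at h2⟩

/-- The star `K_{1,t}` with center `0` and `t` leaves. -/
def starG (t : ℕ) : SimpleGraph (Fin (t + 1)) where
  Adj a b := a ≠ b ∧ (a = 0 ∨ b = 0)
  symm := ⟨fun a b h => ⟨h.1.symm, h.2.symm⟩⟩
  loopless := ⟨fun a h => h.1 rfl⟩

/-!
Write `m = n - 4`. The degree vector, `2, m + 1, 2, 2, m + 1` on the five classes, satisfies
`Q d ≤ (m + 3) d` entrywise (with equality except on classes `2, 3`, where it reads
`m + 7 ≤ 2m + 6`), so the Collatz–Wielandt bound puts every eigenvalue of `Q` below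
`m + 3 = n - 1`. Conversely, on vectors that are constant on the classes and symmetric under the
reflection of `C₅` fixing the big class, `Q` acts as a `3 × 3` matrix with characteristic
polynomial `(μ - m - 1)(μ - 2)(μ - 3) - 2m(μ - 3) - (μ - 2)`. This cubic is negative at
`n - 1 - 1/n` and equals `m - 1 ≥ 0` at `n - 1`, so it has a root, hence an eigenvalue of `Q`,
in between.
-/

section Spectrum

variable {V : Type*} [Fintype V] [DecidableEq V]

theorem Matrix.mem_spectrum_iff_exists_mulVec_eq_smul {K : Type*} [Field K] (M : Matrix V V K)
    (μ : K) : μ ∈ spectrum K M ↔ ∃ x ≠ 0, M *ᵥ x = μ • x := by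
  rw [← Matrix.spectrum_toLin', ← Module.End.hasEigenvalue_iff_mem_spectrum]
  constructor
  · intro h
    obtain ⟨x, hx, hx0⟩ := h.exists_hasEigenvector
    exact ⟨x, hx0, Module.End.mem_eigenspace_iff.mp hx⟩
  · rintro ⟨x, hx0, hx⟩
    exact Module.End.hasEigenvalue_of_hasEigenvector ⟨Module.End.mem_eigenspace_iff.mpr hx, hx0⟩

/-- Collatz–Wielandt: evaluate the eigenvector equation at a coordinate maximizing `|x i| / s i`. -/
theorem Matrix.abs_le_of_mem_spectrum_of_mulVec_le {M : Matrix V V ℝ} (hM : ∀ i j, 0 ≤ M i j)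
    {s : V → ℝ} (hs : ∀ i, 0 < s i) {c : ℝ} (hc : ∀ i, (M *ᵥ s) i ≤ c * s i) {μ : ℝ}
    (hμ : μ ∈ spectrum ℝ M) : |μ| ≤ c := by
  obtain ⟨x, hx0, hx⟩ := (Matrix.mem_spectrum_iff_exists_mulVec_eq_smul M μ).mp hμ
  obtain ⟨v, hv⟩ := Function.ne_iff.mp hx0
  obtain ⟨i, -, hi⟩ := Finset.univ.exists_max_image (fun j => |x j| / s j) ⟨v, Finset.mem_univ v⟩
  set t := |x i| / s i
  have hxj : ∀ j, |x j| ≤ s j * t := fun j => by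
    rw [← div_le_iff₀' (hs j)]; exact hi j (Finset.mem_univ j)
  have ht : 0 < t := lt_of_lt_of_le (div_pos (abs_pos.mpr hv) (hs v)) (hi v (Finset.mem_univ v))
  have hxi : |x i| = s i * t := by rw [mul_div_cancel₀ _ (hs i).ne']
  have key : |μ| * |x i| ≤ c * |x i| := calc
    |μ| * |x i| = |(M *ᵥ x) i| := by rw [hx, Pi.smul_apply, smul_eq_mul, abs_mul]
    _ ≤ ∑ j, M i j * |x j| := by
      rw [Matrix.mulVec, dotProduct]
      refine (Finset.abs_sum_le_sum_abs _ _).trans (le_of_eq ?_)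
      simp only [abs_mul, abs_of_nonneg (hM _ _)]
    _ ≤ ∑ j, M i j * (s j * t) :=
      Finset.sum_le_sum fun j _ => mul_le_mul_of_nonneg_left (hxj j) (hM i j)
    _ = (M *ᵥ s) i * t := by
      rw [Matrix.mulVec, dotProduct, Finset.sum_mul]; simp only [mul_assoc]
    _ ≤ c * s i * t := mul_le_mul_of_nonneg_right (hc i) ht.le
    _ = c * |x i| := by rw [hxi, mul_assoc]
  exact le_of_mul_le_mul_right key (by rw [hxi]; exact mul_pos (hs i) ht)

end Spectrum

section SignlessLaplacian

variable {V : Type*} [Fintype V] [DecidableEq V] (G : SimpleGraph V) [DecidableRel G.Adj]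

theorem signlessLaplacian_eq : signlessLaplacian G = G.degMatrix ℝ + G.adjMatrix ℝ := by
  unfold signlessLaplacian
  congr

theorem signlessLaplacian_mulVec_apply (x : V → ℝ) (v : V) :
    (signlessLaplacian G *ᵥ x) v = ∑ w ∈ G.neighborFinset v, (x v + x w) := by
  rw [signlessLaplacian_eq, Matrix.add_mulVec, Pi.add_apply, degMatrix_mulVec_apply,
    adjMatrix_mulVec_apply, Finset.sum_add_distrib, Finset.sum_const, card_neighborFinset_eq_degree,
    nsmul_eq_mul]

theorem signlessLaplacian_nonneg (v w : V) : 0 ≤ signlessLaplacian G v w := by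
  rw [signlessLaplacian_eq, Matrix.add_apply, degMatrix, Matrix.diagonal_apply, adjMatrix_apply]
  split_ifs <;> positivity

end SignlessLaplacian

section C5blowup

instance (r : Fin 5 → ℕ) : DecidableRel (C5blowup r).Adj :=
  fun a b => inferInstanceAs (Decidable (a.1 = b.1 + 1 ∨ b.1 = a.1 + 1))

theorem signlessLaplacian_C5blowup_mulVec_sigma_fst (r : Fin 5 → ℕ) (y : Fin 5 → ℝ) (i : Fin 5)
    (k : Fin (r i)) :
    (signlessLaplacian (C5blowup r) *ᵥ fun v => y v.1) ⟨i, k⟩ =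
      r (i - 1) * (y i + y (i - 1)) + r (i + 1) * (y i + y (i + 1)) := by
  rw [signlessLaplacian_mulVec_apply, neighborFinset_eq_filter, Finset.sum_filter,
    ← Finset.univ_sigma_univ, Finset.sum_sigma]
  change ∑ j, ∑ _l : Fin (r j), (if i = j + 1 ∨ j = i + 1 then y i + y j else 0) = _
  simp only [Finset.sum_const, Finset.card_univ, Fintype.card_fin, nsmul_eq_mul, Fin.sum_univ_five]
  fin_cases i <;> simp [show (-1 : Fin 5) = 4 from rfl] <;> ring

end C5blowup

section OneBigClass

variable (m : ℕ)

theorem C5blowup_le_of_mem_spectrum (hm : 1 ≤ m) {μ : ℝ}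
    (hμ : μ ∈ spectrum ℝ (signlessLaplacian (C5blowup ![m, 1, 1, 1, 1]))) : μ ≤ m + 3 := by
  have hm' : (1 : ℝ) ≤ m := by exact_mod_cast hm
  set d : Fin 5 → ℝ := ![2, m + 1, 2, 2, m + 1]
  refine (le_abs_self μ).trans <| Matrix.abs_le_of_mem_spectrum_of_mulVec_le
    (signlessLaplacian_nonneg _) (s := fun v => d v.1) ?_ ?_ hμ
  · rintro ⟨i, k⟩
    fin_cases i <;> simp [d] <;> positivity
  · rintro ⟨i, k⟩
    rw [signlessLaplacian_C5blowup_mulVec_sigma_fst]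
    fin_cases i <;> simp [d, show (-1 : Fin 5) = 4 from rfl] <;> nlinarith

theorem C5blowup_mem_spectrum_of_cubic {μ : ℝ}
    (hμ : (μ - m - 1) * (μ - 2) * (μ - 3) = 2 * m * (μ - 3) + (μ - 2)) (h2 : μ ≠ 2) :
    μ ∈ spectrum ℝ (signlessLaplacian (C5blowup ![m, 1, 1, 1, 1])) := by
  set y : Fin 5 → ℝ := ![2 * (μ - 3), (μ - 3) * (μ - 2), μ - 2, μ - 2, (μ - 3) * (μ - 2)]
  refine (Matrix.mem_spectrum_iff_exists_mulVec_eq_smul _ μ).mpr ⟨fun v => y v.1, ?_, ?_⟩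
  · intro h0
    have h := congrFun h0 ⟨2, (0 : Fin 1)⟩
    exact h2 (sub_eq_zero.mp h)
  · funext ⟨i, k⟩
    rw [signlessLaplacian_C5blowup_mulVec_sigma_fst]
    fin_cases i <;> simp [y, show (-1 : Fin 5) = 4 from rfl] <;>
      first | ring1 | linear_combination -hμ

theorem exists_cubic_root_gt (hm : 1 ≤ m) :
    ∃ μ : ℝ, (m + 4) - 1 - 1 / (m + 4) < μ ∧
      (μ - m - 1) * (μ - 2) * (μ - 3) = 2 * m * (μ - 3) + (μ - 2) := by
  have hm' : (1 : ℝ) ≤ m := by exact_mod_cast hm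
  set f : ℝ → ℝ := fun μ => (μ - m - 1) * (μ - 2) * (μ - 3) - (2 * m * (μ - 3) + (μ - 2))
  set lo : ℝ := (m + 4) - 1 - 1 / (m + 4)
  have hflo : f lo < 0 := by
    have : f lo = -(3 * (m + 4) ^ 2 + 5 * (m + 4) + 1) / ((m : ℝ) + 4) ^ 3 := by
      simp only [f, lo]
      field_simp
      ring
    rw [this]
    exact div_neg_of_neg_of_pos (by nlinarith) (by positivity)
  have hfhi : f (m + 3) = m - 1 := by simp only [f]; ring
  have hlohi : lo ≤ m + 3 := by
    have : 0 < 1 / ((m : ℝ) + 4) := by positivity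
    simp only [lo]; linarith
  obtain ⟨μ, hμ, hfμ⟩ := intermediate_value_Icc hlohi (f := f) (by fun_prop)
    ⟨hflo.le, by linarith⟩
  refine ⟨μ, lt_of_le_of_ne hμ.1 ?_, sub_eq_zero.mp hfμ⟩
  rintro rfl
  linarith

end OneBigClass

/-- For `n ≥ 5`, `n - 1 - 1/n < q(C₅ ∘ (n-4,1,1,1,1)) < n - 1/n`. -/
theorem stmt6 {n : ℕ} (hn : 5 ≤ n) :
    (n : ℝ) - 1 - 1 / n < qIndex (C5blowup ![n - 4, 1, 1, 1, 1]) ∧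
    qIndex (C5blowup ![n - 4, 1, 1, 1, 1]) < (n : ℝ) - 1 / n := by
  set m := n - 4
  have hn' : (n : ℝ) = m + 4 := by simp only [m]; rw [Nat.cast_sub (by omega)]; ring
  have hinv : 1 / ((m : ℝ) + 4) < 1 := by
    rw [← hn', div_lt_one (by positivity)]
    norm_cast; omega
  obtain ⟨μ, hμ_gt, hμ_root⟩ := exists_cubic_root_gt m (by omega)
  have hμ : μ ∈ spectrum ℝ (signlessLaplacian (C5blowup ![m, 1, 1, 1, 1])) :=
    C5blowup_mem_spectrum_of_cubic m hμ_root (by linarith)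
  have hle : ∀ ν ∈ spectrum ℝ (signlessLaplacian (C5blowup ![m, 1, 1, 1, 1])), ν ≤ m + 3 :=
    fun ν => C5blowup_le_of_mem_spectrum m (by omega)
  have hq_le : qIndex (C5blowup ![m, 1, 1, 1, 1]) ≤ m + 3 := csSup_le ⟨μ, hμ⟩ hle
  have hμ_le : μ ≤ qIndex (C5blowup ![m, 1, 1, 1, 1]) := le_csSup ⟨m + 3, hle⟩ hμ
  rw [hn']
  constructor <;> linarith
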